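/- arXiv:2308.14554 — 4 statements merged into one kernel-verified Lean document; each statement's English description precedes it below -/
import Mathlib

section
/- Let d be a positive integer and let G be a countable graph with all vertex degrees at most d. If G has Property A, then G is uniformly locally amenable. -/
open scoped ENNReal
open MeasureTheory

namespace AFPaper

variable {V : Type*} {W : Type*}

/-- The ball of radius `r` around `x` in the graph `G`. -/
def gball (G : SimpleGraph V) (x : V) (r : ℕ) : Set V :=
  {y | G.Reachable x y ∧ G.dist x y ≤ r}

/-- All vertex degrees of `G` are at most `d`. -/
def DegLE (G : SimpleGraph V) (d : ℕ) : Prop :=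
  ∀ v : V, (G.neighborSet v).Finite ∧ (G.neighborSet v).ncard ≤ d

/-- The boundary of `F` inside the induced subgraph on the ambient set `L`:
vertices of `F` adjacent (in `G`) to some vertex of `L` outside `F`. -/
def boundaryIn (G : SimpleGraph V) (L F : Set V) : Set V :=
  {x ∈ F | ∃ y ∈ L \ F, G.Adj x y}

/-- The boundary of `F` in `G`. -/
def boundary (G : SimpleGraph V) (F : Set V) : Set V :=
  boundaryIn G Set.univ F

/-- `F` is an `ε`-Følner set with respect to the induced subgraph on `L`. -/
def IsFolnerIn (G : SimpleGraph V) (L : Set V) (ε : ℝ) (F : Set V) : Prop :=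
  F.Finite ∧ ((boundaryIn G L F).ncard : ℝ) < ε * (F.ncard : ℝ)

/-- `F` is an `ε`-Følner set in `G`. -/
def IsFolner (G : SimpleGraph V) (ε : ℝ) (F : Set V) : Prop :=
  IsFolnerIn G Set.univ ε F

/-- The set `F` has diameter at most `r` in `G`. -/
def DiamLE (G : SimpleGraph V) (r : ℕ) (F : Set V) : Prop :=
  ∀ x ∈ F, ∀ y ∈ F, G.Reachable x y ∧ G.dist x y ≤ r

/-- The connected component of `x` in the subgraph of `G` induced on `S`. -/
def componentIn (G : SimpleGraph V) (S : Set V) (x : V) : Set V :=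
  {y | ∃ (hx : x ∈ S) (hy : y ∈ S), (G.induce S).Reachable ⟨x, hx⟩ ⟨y, hy⟩}

/-- All connected components of the subgraph induced on `S` have size at most `k`. -/
def SmallComponents (G : SimpleGraph V) (S : Set V) (k : ℕ) : Prop :=
  ∀ x ∈ S, (componentIn G S x).Finite ∧ (componentIn G S x).ncard ≤ k

/-- A witness for Property A with accuracy `ε` and radius `r`. -/
def PropertyAWith (G : SimpleGraph V) (ε : ℝ) (r : ℕ) : Prop :=
  ∃ Θ : V → V → ℝ,
    (∀ x, (Function.support (Θ x)).Finite) ∧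
    (∀ x y, 0 ≤ Θ x y) ∧
    (∀ x, (∑ᶠ y, Θ x y) = 1) ∧
    (∀ x y, Θ x y ≠ 0 → y ∈ gball G x r) ∧
    (∀ x y, G.Adj x y → (∑ᶠ z, |Θ x z - Θ y z|) < ε)

/-- Property A for graphs. -/
def PropertyA (G : SimpleGraph V) : Prop :=
  ∀ ε : ℝ, 0 < ε → ∃ r : ℕ, 1 ≤ r ∧ PropertyAWith G ε r

/-- Uniform local amenability. -/
def UniformlyLocallyAmenable (G : SimpleGraph V) : Prop :=
  ∀ ε : ℝ, 0 < ε → ∃ k : ℕ, 0 < k ∧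
    ∀ L : Set V, L.Finite → L.Nonempty →
      ∃ M : Set V, M ⊆ L ∧ M.Nonempty ∧ M.ncard ≤ k ∧ IsFolnerIn G L ε M

/-- Local hyperfiniteness. -/
def LocallyHyperfinite (G : SimpleGraph V) : Prop :=
  ∀ ε : ℝ, 0 < ε → ∃ k : ℕ, 0 < k ∧
    ∀ L : Set V, L.Finite → L.Nonempty →
      ∃ L' : Set V, L' ⊆ L ∧ ((L'.ncard : ℝ) < ε * (L.ncard : ℝ)) ∧
        SmallComponents G (L \ L') k

/-- Weighted hyperfiniteness. -/
def WeightedHyperfinite (G : SimpleGraph V) : Prop :=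
  ∀ ε : ℝ, 0 < ε → ∃ k : ℕ, 0 < k ∧
    ∀ w : V → ℝ, (Function.support w).Finite → (∀ x, 0 ≤ w x) →
      ∃ L : Set V, (∑ᶠ x ∈ L, w x) ≤ ε * (∑ᶠ x, w x) ∧ SmallComponents G Lᶜ k

/-- `Y` is a `k`-separator: deleting `Y` leaves components of size at most `k`. -/
def IsSeparator (G : SimpleGraph V) (k : ℕ) (Y : Set V) : Prop :=
  SmallComponents G Yᶜ k

/-- The space of `k`-separators, as a subspace of `V → Bool` (product of discrete
spaces); its Borel σ-algebra coincides with the induced product σ-algebra used here. -/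
abbrev SepSpace (G : SimpleGraph V) (k : ℕ) :=
  {f : V → Bool // IsSeparator G k {x | f x = true}}

/-- Strong hyperfiniteness. -/
def StronglyHyperfinite (G : SimpleGraph V) : Prop :=
  ∀ ε : ℝ, 0 < ε → ∃ k : ℕ, 0 < k ∧
    ∃ μ : Measure (SepSpace G k), μ Set.univ = 1 ∧
      ∀ x : V, μ {Y : SepSpace G k | Y.1 x = true} < ENNReal.ofReal ε

/-- An `(ε,r)`-Følner packing, encoded as a partial equivalence relation
`p : V → V → Bool` ("being in the same member of the packing"); the classes are the
members of the packing, and `p x x = false` exactly when `x` is not covered. -/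
structure IsPacking (G : SimpleGraph V) (ε : ℝ) (r : ℕ) (p : V → V → Bool) : Prop where
  symm : ∀ x y, p x y = true → p y x = true
  trans : ∀ x y z, p x y = true → p y z = true → p x z = true
  folner : ∀ x, p x x = true → IsFolner G ε {y | p x y = true}
  diam : ∀ x, p x x = true → DiamLE G r {y | p x y = true}

/-- The space of `(ε,r)`-packings of `G`, as a subspace of `V → V → Bool`. -/
abbrev PackingSpace (G : SimpleGraph V) (ε : ℝ) (r : ℕ) :=
  {p : V → V → Bool // IsPacking G ε r p}

/-- Strong Følner hyperfiniteness. -/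
def StronglyFolnerHyperfinite (G : SimpleGraph V) : Prop :=
  ∀ ε : ℝ, 0 < ε → ∃ r : ℕ, 1 ≤ r ∧
    ∃ ν : Measure (PackingSpace G ε r), ν Set.univ = 1 ∧
      ∀ x : V, ENNReal.ofReal (1 - ε) < ν {P : PackingSpace G ε r | P.1 x x = true}

/-- A packing is a tiling when it covers every vertex. -/
def IsTiling (p : V → V → Bool) : Prop := ∀ x, p x x = true

/-- Strong almost finiteness. -/
def StronglyAlmostFinite (G : SimpleGraph V) : Prop :=
  ∀ ε : ℝ, 0 < ε → ∃ r : ℕ, 1 ≤ r ∧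
    ∃ ν : Measure (PackingSpace G ε r), ν Set.univ = 1 ∧
      ν {P : PackingSpace G ε r | IsTiling P.1} = 1 ∧
      ∀ x : V, ν {P : PackingSpace G ε r | x ∈ boundary G {y | P.1 x y = true}} <
        ENNReal.ofReal ε

/-- Almost finiteness: `V(G)` can be tiled by `ε`-Følner sets of diameter at most `r`. -/
def AlmostFinite (G : SimpleGraph V) : Prop :=
  ∀ ε : ℝ, 0 < ε → ∃ r : ℕ, ∃ T : Set (Set V),
    (∀ F ∈ T, IsFolner G ε F ∧ DiamLE G r F) ∧
    T.PairwiseDisjoint id ∧ ⋃₀ T = Set.univ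

/-- Uniform amenability. -/
def UniformlyAmenable (G : SimpleGraph V) : Prop :=
  ∀ ε : ℝ, 0 < ε → ∃ r : ℕ, ∀ x : V, ∃ F : Set V, F ⊆ gball G x r ∧ IsFolner G ε F

/-- The `r`-neighborhood of a set `L`. -/
def setBall (G : SimpleGraph V) (L : Set V) (r : ℕ) : Set V :=
  ⋃ x ∈ L, gball G x r

/-- The uniform Følner property. -/
def UniformlyFolner (G : SimpleGraph V) : Prop :=
  ∀ ε : ℝ, 0 < ε → ∃ r : ℕ, 1 < r ∧
    ∀ L : Set V, L.Finite → L.Nonempty →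
      ∃ H : Set V, L ⊆ H ∧ H ⊆ setBall G L r ∧ IsFolner G ε H

/-- The Følner sum `Σ_x Σ_{y ∼ x} |f(x) − f(y)|`. -/
noncomputable def FolnerSum (G : SimpleGraph V) (f : V → ℝ) : ℝ :=
  ∑ᶠ x, ∑ᶠ y ∈ G.neighborSet x, |f x - f y|

/-- `f` is an `ε`-Følner function. -/
def IsFolnerFun (G : SimpleGraph V) (ε : ℝ) (f : V → ℝ) : Prop :=
  (Function.support f).Finite ∧ (∀ x, 0 ≤ f x) ∧ f ≠ 0 ∧
    FolnerSum G f < ε * (∑ᶠ x, f x)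

/-- `f` is an `ε`-Følner probability measure. -/
def IsFolnerProb (G : SimpleGraph V) (ε : ℝ) (f : V → ℝ) : Prop :=
  IsFolnerFun G ε f ∧ (∑ᶠ x, f x) = 1

/-- Følner Property A. -/
def FolnerPropertyA (G : SimpleGraph V) : Prop :=
  ∀ ε : ℝ, 0 < ε → ∃ r : ℕ, 1 ≤ r ∧
    ∃ Θ : V → V → ℝ,
      (∀ x, IsFolnerProb G ε (Θ x)) ∧
      (∀ x y, Θ x y ≠ 0 → y ∈ gball G x r) ∧
      (∀ x y, G.Adj x y → (∑ᶠ z, |Θ x z - Θ y z|) < ε)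

/-- The collection of `ε`-Følner sets of diameter at most `r`. -/
def FolnerSets (G : SimpleGraph V) (ε : ℝ) (r : ℕ) : Set (Set V) :=
  {H | IsFolner G ε H ∧ DiamLE G r H}

/-- Fractional almost finiteness. -/
def FractionallyAlmostFinite (G : SimpleGraph V) : Prop :=
  ∀ ε : ℝ, 0 < ε → ∃ r : ℕ, 1 ≤ r ∧
    ∃ F : Set V → ℝ,
      (∀ H ∈ FolnerSets G ε r, 0 ≤ F H) ∧
      (∀ x : V, ∃ c : ℝ, 0 ≤ c ∧ c < ε ∧
        (∑ᶠ H ∈ {H ∈ FolnerSets G ε r | x ∈ H}, F H) = 1 - c) ∧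
      (∀ x : V, (∑ᶠ H ∈ {H ∈ FolnerSets G ε r | x ∈ boundary G H}, F H) < ε)

/-- Subexponential growth: `lim_{r→∞} sup_x log|B_r(x)|/r = 0`. -/
def SubexpGrowth (G : SimpleGraph V) : Prop :=
  ∀ ε : ℝ, 0 < ε → ∃ R : ℕ, ∀ r : ℕ, R ≤ r → ∀ x : V,
    Real.log ((gball G x r).ncard : ℝ) < ε * (r : ℝ)

/-- The rooted `r`-ball of `G` at `v` is rooted-isomorphic to the rooted `r`-ball of
`H` at `w`. -/
def BallIso (G : SimpleGraph V) (v : V) (H : SimpleGraph W) (w : W) (r : ℕ) : Prop :=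
  ∃ (hv : v ∈ gball G v r) (hw : w ∈ gball H w r)
    (φ : ↥(gball G v r) ≃ ↥(gball H w r)),
      φ ⟨v, hv⟩ = ⟨w, hw⟩ ∧
      ∀ a b : ↥(gball G v r), G.Adj ↑a ↑b ↔ H.Adj ↑(φ a) ↑(φ b)

/-- Neighborhood equivalence of graphs. -/
def NeighborhoodEquiv (G : SimpleGraph V) (H : SimpleGraph W) : Prop :=
  (∀ (r : ℕ) (v : V), ∃ w : W, BallIso G v H w r) ∧
  (∀ (r : ℕ) (w : W), ∃ v : V, BallIso H w G v r)

end AFPaper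

/-! If no nonempty subset of `L` with at most `(d + 1) ^ r` elements is `ε`-Følner in `L`, take a
Property A witness `Θ` of accuracy `δ` and radius `r`. For every vertex `z` and every `t > 0` the
superlevel set `{x ∈ L | t < Θ x z}` lies in the `r`-ball around `z`, so its boundary in `L` has at
least `ε` times its size. Integrating over `t` (the discrete coarea formula) and summing over `z`
gives `ε |L| ≤ ∑_{x ∈ L} ∑_{y ∈ L, y ∼ x} ‖Θ x - Θ y‖₁ ≤ d δ |L|`, which fails for
`δ = ε / (2 d)`. -/

namespace AFPaper

open Set Finset

section Balls

variable {V : Type*} {G : SimpleGraph V} {d : ℕ}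

theorem DegLE.card_filter_adj_le [DecidableRel G.Adj] (hdeg : DegLE G d) (s : Finset V) (x : V) :
    #{y ∈ s | G.Adj x y} ≤ d := by
  refine (Finset.card_le_card fun y hy => ?_).trans
    ((ncard_eq_toFinset_card _ (hdeg x).1).ge.trans (hdeg x).2)
  simpa using (Finset.mem_filter.1 hy).2

theorem DegLE.exists_finset_walk_length_le (hdeg : DegLE G d) (z : V) (n : ℕ) :
    ∃ F : Finset V, #F ≤ (d + 1) ^ n ∧ ∀ w (p : G.Walk w z), p.length ≤ n → w ∈ F := by
  classical
  induction n with
  | zero =>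
    refine ⟨{z}, by simp, fun w p hp => ?_⟩
    simp [SimpleGraph.Walk.eq_of_length_eq_zero (Nat.le_zero.1 hp)]
  | succ n ih =>
    obtain ⟨F, hcard, hF⟩ := ih
    refine ⟨F ∪ F.biUnion fun u => (hdeg u).1.toFinset, ?_, fun w p hp => ?_⟩
    · calc #(F ∪ F.biUnion fun u => (hdeg u).1.toFinset)
          ≤ #F + ∑ u ∈ F, #(hdeg u).1.toFinset :=
            (Finset.card_union_le _ _).trans (by gcongr; exact Finset.card_biUnion_le)
        _ ≤ #F + ∑ _u ∈ F, d := by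
            gcongr with u
            exact (ncard_eq_toFinset_card _ (hdeg u).1).ge.trans (hdeg u).2
        _ ≤ (d + 1) ^ (n + 1) := by
            rw [Finset.sum_const, smul_eq_mul, pow_succ]
            nlinarith
    · cases p with
      | nil => exact Finset.mem_union_left _ (hF _ .nil (Nat.zero_le n))
      | cons hadj q =>
        refine Finset.mem_union_right _ (Finset.mem_biUnion.2 ⟨_, hF _ q ?_, ?_⟩)
        · simpa using hp
        · simpa using hadj.symm

theorem DegLE.ncard_le_of_subset_gball (hdeg : DegLE G d) {z : V} {r : ℕ} {M : Set V}
    (hM : M ⊆ gball G z r) : M.ncard ≤ (d + 1) ^ r := by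
  obtain ⟨F, hcard, hF⟩ := hdeg.exists_finset_walk_length_le z r
  have hball : gball G z r ⊆ F := fun w ⟨hreach, hdist⟩ => by
    obtain ⟨p, hp⟩ := hreach.exists_walk_length_eq_dist
    exact hF w p.reverse (by simpa [hp] using hdist)
  exact (ncard_le_ncard (hM.trans hball) F.finite_toSet).trans (by simpa using hcard)

end Balls

section Coarea

theorem integrableOn_Ioi_indicator_Iio (a : ℝ) :
    IntegrableOn ((Iio a).indicator (1 : ℝ → ℝ)) (Ioi 0) := by
  rw [IntegrableOn, integrable_indicator_iff measurableSet_Iio]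
  refine (integrableOn_const_iff (by simp)).2 (Or.inr ?_)
  rw [Measure.restrict_apply measurableSet_Iio, Iio_inter_Ioi, Real.volume_Ioo]
  exact ENNReal.ofReal_lt_top

theorem integral_Ioi_indicator_Iio {a : ℝ} (ha : 0 ≤ a) :
    ∫ t in Ioi 0, (Iio a).indicator (1 : ℝ → ℝ) t = a := by
  rw [integral_indicator_one measurableSet_Iio, measureReal_restrict_apply measurableSet_Iio,
    Iio_inter_Ioi, Real.volume_real_Ioo_of_le ha, sub_zero]

theorem abs_indicator_Iio_sub_indicator_Iio (a b t : ℝ) :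
    |(Iio a).indicator (1 : ℝ → ℝ) t - (Iio b).indicator 1 t|
      = (Iio (max a b)).indicator 1 t - (Iio (min a b)).indicator 1 t := by
  by_cases ha : t < a <;> by_cases hb : t < b <;> simp [ha, hb]

theorem integrableOn_Ioi_abs_indicator_Iio_sub (a b : ℝ) :
    IntegrableOn (fun t => |(Iio a).indicator (1 : ℝ → ℝ) t - (Iio b).indicator 1 t|) (Ioi 0) :=
  ((integrableOn_Ioi_indicator_Iio a).sub (integrableOn_Ioi_indicator_Iio b)).abs

theorem integral_Ioi_abs_indicator_Iio_sub {a b : ℝ} (ha : 0 ≤ a) (hb : 0 ≤ b) :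
    ∫ t in Ioi 0, |(Iio a).indicator (1 : ℝ → ℝ) t - (Iio b).indicator 1 t| = |a - b| := by
  simp_rw [abs_indicator_Iio_sub_indicator_Iio]
  rw [integral_sub (integrableOn_Ioi_indicator_Iio _) (integrableOn_Ioi_indicator_Iio _),
    integral_Ioi_indicator_Iio (le_max_of_le_left ha), integral_Ioi_indicator_Iio (le_min ha hb),
    max_sub_min_eq_abs']

variable {V : Type*} (G : SimpleGraph V) [DecidableRel G.Adj]

theorem card_filter_lt_eq_sum_indicator (L : Finset V) (f : V → ℝ) (t : ℝ) :
    (#{x ∈ L | t < f x} : ℝ) = ∑ x ∈ L, (Iio (f x)).indicator 1 t := by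
  rw [Finset.card_filter]
  push_cast
  simp [indicator_apply]

theorem ncard_boundaryIn_filter_lt_le (L : Finset V) (f : V → ℝ) (t : ℝ) :
    ((boundaryIn G L {x ∈ L | t < f x}).ncard : ℝ)
      ≤ ∑ x ∈ L, ∑ y ∈ L with G.Adj x y,
          |(Iio (f x)).indicator 1 t - (Iio (f y)).indicator 1 t| := by
  classical
  set B := boundaryIn G L {x ∈ L | t < f x}
  have hB : B = ↑{x ∈ L | x ∈ B} := by
    ext x
    simpa using fun hx : x ∈ B => hx.1.1
  rw [hB, ncard_coe_finset, Finset.card_filter]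
  push_cast
  refine Finset.sum_le_sum fun x _ => ?_
  split_ifs with hxB
  · obtain ⟨⟨-, hxt⟩, y, ⟨hyL, hyt⟩, hxy⟩ := hxB
    have hyt : ¬t < f y := fun h => hyt ⟨hyL, h⟩
    refine le_of_eq_of_le ?_ (Finset.single_le_sum (fun y _ => abs_nonneg
      ((Iio (f x)).indicator 1 t - (Iio (f y)).indicator (1 : ℝ → ℝ) t))
      (Finset.mem_filter.2 ⟨hyL, hxy⟩))
    simp [hxt, hyt]
  · positivity

theorem mul_sum_le_sum_abs_sub_of_boundaryIn_filter_lt {ε : ℝ} (L : Finset V) {f : V → ℝ}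
    (hf : ∀ x ∈ L, 0 ≤ f x)
    (h : ∀ t > 0, ε * #{x ∈ L | t < f x} ≤ (boundaryIn G L {x ∈ L | t < f x}).ncard) :
    ε * ∑ x ∈ L, f x ≤ ∑ x ∈ L, ∑ y ∈ L with G.Adj x y, |f x - f y| := by
  have hint : ∀ x, IntegrableOn ((Iio (f x)).indicator (1 : ℝ → ℝ)) (Ioi 0) :=
    fun x => integrableOn_Ioi_indicator_Iio _
  calc ε * ∑ x ∈ L, f x = ∫ t in Ioi 0, ε * ∑ x ∈ L, (Iio (f x)).indicator 1 t := by
        rw [integral_const_mul, integral_finsetSum _ fun x _ => hint x]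
        exact congrArg _
          (Finset.sum_congr rfl fun x hx => (integral_Ioi_indicator_Iio (hf x hx)).symm)
    _ ≤ ∫ t in Ioi 0, ∑ x ∈ L, ∑ y ∈ L with G.Adj x y,
          |(Iio (f x)).indicator 1 t - (Iio (f y)).indicator 1 t| := by
        refine setIntegral_mono_on ((integrable_finsetSum _ fun x _ => hint x).const_mul ε)
          (integrable_finsetSum _ fun x _ => integrable_finsetSum _ fun y _ =>
            integrableOn_Ioi_abs_indicator_Iio_sub _ _) measurableSet_Ioi fun t ht => ?_
        rw [← card_filter_lt_eq_sum_indicator]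
        exact (h t ht).trans (ncard_boundaryIn_filter_lt_le G L f t)
    _ = ∑ x ∈ L, ∑ y ∈ L with G.Adj x y, |f x - f y| := by
        rw [integral_finsetSum _ fun x _ => integrable_finsetSum _ fun y _ =>
          integrableOn_Ioi_abs_indicator_Iio_sub _ _]
        refine Finset.sum_congr rfl fun x hx => ?_
        rw [integral_finsetSum _ fun y _ => integrableOn_Ioi_abs_indicator_Iio_sub _ _]
        exact Finset.sum_congr rfl fun y hy =>
          integral_Ioi_abs_indicator_Iio_sub (hf x hx) (hf y (Finset.mem_filter.1 hy).1)

end Coarea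

section PropertyA

variable {V : Type*} {G : SimpleGraph V} {d r : ℕ} {ε : ℝ}

theorem mem_gball_comm {x z : V} : x ∈ gball G z r ↔ z ∈ gball G x r := by
  constructor <;> exact fun ⟨hreach, hdist⟩ => ⟨hreach.symm, by rwa [SimpleGraph.dist_comm]⟩

theorem mul_sum_le_sum_abs_sub_of_support_subset_gball [DecidableRel G.Adj] (hdeg : DegLE G d)
    (L : Finset V)
    (hL : ∀ M ⊆ (L : Set V), M.Nonempty → M.ncard ≤ (d + 1) ^ r → ¬IsFolnerIn G L ε M)
    {f : V → ℝ} (hf : ∀ x ∈ L, 0 ≤ f x) {z : V} (hsupp : Function.support f ⊆ gball G z r) :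
    ε * ∑ x ∈ L, f x ≤ ∑ x ∈ L, ∑ y ∈ L with G.Adj x y, |f x - f y| := by
  refine mul_sum_le_sum_abs_sub_of_boundaryIn_filter_lt G L hf fun t ht => ?_
  set A := {x ∈ L | t < f x}
  rcases A.eq_empty_or_nonempty with hA | hA
  · simp [A, hA]
  have hsmall : (A : Set V).ncard ≤ (d + 1) ^ r :=
    hdeg.ncard_le_of_subset_gball fun x hx => hsupp (ht.trans (Finset.mem_filter.1 hx).2).ne'
  have hnot :=
    hL A (Finset.coe_subset.2 (Finset.filter_subset _ _)) (Finset.coe_nonempty.2 hA) hsmall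
  rw [IsFolnerIn, not_and, not_lt, ncard_coe_finset] at hnot
  simpa [A] using hnot A.finite_toSet

theorem PropertyAWith.mul_card_le_of_forall_not_isFolnerIn (hdeg : DegLE G d) {δ : ℝ} (hδ : 0 ≤ δ)
    (hA : PropertyAWith G δ r) (L : Finset V)
    (hL : ∀ M ⊆ (L : Set V), M.Nonempty → M.ncard ≤ (d + 1) ^ r → ¬IsFolnerIn G L ε M) :
    ε * #L ≤ d * δ * #L := by
  classical
  obtain ⟨Θ, hfin, hnonneg, hsum, hball, hvar⟩ := hA
  set S := L.biUnion fun x => (hfin x).toFinset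
  have hsupp : ∀ x ∈ L, Function.support (Θ x) ⊆ S := fun x hx z hz => by
    simpa [S] using ⟨x, hx, hz⟩
  have hmass : ∑ z ∈ S, ∑ x ∈ L, Θ x z = #L := by
    rw [Finset.sum_comm, Finset.card_eq_sum_ones, Nat.cast_sum]
    refine Finset.sum_congr rfl fun x hx => ?_
    rw [← finsum_eq_sum_of_support_subset _ (hsupp x hx), hsum x, Nat.cast_one]
  have hvar_sum : ∀ x ∈ L, ∑ y ∈ L with G.Adj x y, ∑ z ∈ S, |Θ x z - Θ y z| ≤ d * δ := by
    intro x hx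
    calc ∑ y ∈ L with G.Adj x y, ∑ z ∈ S, |Θ x z - Θ y z|
        ≤ ∑ y ∈ L with G.Adj x y, δ := Finset.sum_le_sum fun y hy => by
          obtain ⟨hy, hxy⟩ := Finset.mem_filter.1 hy
          refine le_of_eq_of_le (finsum_eq_sum_of_support_subset _ fun z hz => ?_).symm
            (hvar x y hxy).le
          by_contra hzS
          have hxz := Function.notMem_support.1 fun h => hzS (hsupp x hx h)
          have hyz := Function.notMem_support.1 fun h => hzS (hsupp y hy h)
          simp [hxz, hyz] at hz
      _ = #{y ∈ L | G.Adj x y} * δ := by rw [Finset.sum_const, nsmul_eq_mul]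
      _ ≤ d * δ := by gcongr; exact_mod_cast hdeg.card_filter_adj_le L x
  calc ε * #L = ∑ z ∈ S, ε * ∑ x ∈ L, Θ x z := by rw [← Finset.mul_sum, hmass]
    _ ≤ ∑ z ∈ S, ∑ x ∈ L, ∑ y ∈ L with G.Adj x y, |Θ x z - Θ y z| :=
        Finset.sum_le_sum fun z _ =>
          mul_sum_le_sum_abs_sub_of_support_subset_gball hdeg L hL (fun x _ => hnonneg x z)
            fun x hx => mem_gball_comm.2 (hball x z hx)
    _ = ∑ x ∈ L, ∑ y ∈ L with G.Adj x y, ∑ z ∈ S, |Θ x z - Θ y z| := by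
        rw [Finset.sum_comm]
        exact Finset.sum_congr rfl fun x _ => Finset.sum_comm
    _ ≤ ∑ _x ∈ L, d * δ := Finset.sum_le_sum hvar_sum
    _ = d * δ * #L := by rw [Finset.sum_const, nsmul_eq_mul, mul_comm]

end PropertyA

theorem propertyA_implies_uniformlyLocallyAmenable_general
    (d : ℕ) (hd : 0 < d) {V : Type}
    (G : SimpleGraph V) (hdeg : DegLE G d)
    (hA : PropertyA G) :
    UniformlyLocallyAmenable G := by
  intro ε hε
  have hd' : (0 : ℝ) < d := by exact_mod_cast hd
  obtain ⟨r, -, hAr⟩ := hA (ε / (2 * d)) (by positivity)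
  refine ⟨(d + 1) ^ r, by positivity, fun L hLfin hLne => ?_⟩
  by_contra! hL
  lift L to Finset V using hLfin
  have hcard : (0 : ℝ) < #L := by exact_mod_cast (Finset.coe_nonempty.1 hLne).card_pos
  have hle := hAr.mul_card_le_of_forall_not_isFolnerIn hdeg (by positivity) L hL
  have hhalf : (d : ℝ) * (ε / (2 * d)) = ε / 2 := by field_simp
  nlinarith

/-- Property A implies uniform local amenability. -/
theorem propertyA_implies_uniformlyLocallyAmenable
    (d : ℕ) (hd : 0 < d) {V : Type} [Countable V]
    (G : SimpleGraph V) (hdeg : DegLE G d)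
    (hA : PropertyA G) :
    UniformlyLocallyAmenable G :=
  propertyA_implies_uniformlyLocallyAmenable_general d hd G hdeg hA

end AFPaper
end

section
/- Let d be a positive integer and let G be a countable graph with all vertex degrees at most d. If G is uniformly locally amenable, then G is locally hyperfinite. -/
open scoped ENNReal
open MeasureTheory

/-!
Peel off Følner sets greedily. Given a finite `L`, pick a nonempty `M ⊆ L` with at most `k`
vertices that is `ε`-Følner inside `L`, and delete its boundary `∂_L M`, which has fewer than
`ε|M|` vertices. The rest of `M` has no edges to `L \ M`, so it splits into components of size at
most `k`, and we recurse on the strictly smaller set `L \ M`. The deleted sets add up to fewer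
than `ε|L|` vertices.
-/

namespace AFPaper

variable {V : Type*} {G : SimpleGraph V}

lemma exists_reachable_induce_of_closed {S A : Set V}
    (hA : ∀ x ∈ A, ∀ y ∈ S, G.Adj x y → y ∈ A) {u v : S} (w : (G.induce S).Walk u v)
    (hu : (u : V) ∈ A) : ∃ hv : (v : V) ∈ A, (G.induce A).Reachable ⟨u, hu⟩ ⟨v, hv⟩ := by
  induction w with
  | nil => exact ⟨hu, .rfl⟩
  | @cons a b c hab _ ih =>
    have hb : (b : V) ∈ A := hA _ hu _ b.2 hab
    obtain ⟨hc, hbc⟩ := ih hb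
    exact ⟨hc, (show (G.induce A).Adj ⟨a, hu⟩ ⟨b, hb⟩ from hab).reachable.trans hbc⟩

lemma componentIn_subset_of_closed {S A : Set V}
    (hA : ∀ x ∈ A, ∀ y ∈ S, G.Adj x y → y ∈ A) {x : V} (hx : x ∈ A) :
    componentIn G S x ⊆ componentIn G A x := by
  rintro y ⟨_, _, ⟨w⟩⟩
  obtain ⟨hy, hxy⟩ := exists_reachable_induce_of_closed hA w hx
  exact ⟨hx, hy, hxy⟩

lemma componentIn_subset (S : Set V) (x : V) : componentIn G S x ⊆ S := by
  rintro y ⟨-, hy, -⟩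
  exact hy

lemma smallComponents_of_ncard_le {S : Set V} {k : ℕ} (hS : S.Finite) (hk : S.ncard ≤ k) :
    SmallComponents G S k := fun x _ =>
  ⟨hS.subset (componentIn_subset S x),
    (Set.ncard_le_ncard (componentIn_subset S x) hS).trans hk⟩

lemma SmallComponents.union {A B : Set V} {k : ℕ} (hA : SmallComponents G A k)
    (hB : SmallComponents G B k) (hAB : ∀ x ∈ A, ∀ y ∈ B, ¬ G.Adj x y) :
    SmallComponents G (A ∪ B) k := by
  have of_closed : ∀ {C : Set V}, SmallComponents G C k →
      (∀ x ∈ C, ∀ y ∈ A ∪ B, G.Adj x y → y ∈ C) → ∀ x ∈ C,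
        (componentIn G (A ∪ B) x).Finite ∧ (componentIn G (A ∪ B) x).ncard ≤ k := by
    intro C hC hclosed x hx
    have hsub := componentIn_subset_of_closed hclosed hx
    obtain ⟨hfin, hcard⟩ := hC x hx
    exact ⟨hfin.subset hsub, (Set.ncard_le_ncard hsub hfin).trans hcard⟩
  rintro x (hx | hx)
  · exact of_closed hA (fun a ha b hb hab => hb.resolve_right fun hb' => hAB a ha b hb' hab) x hx
  · exact of_closed hB (fun b hb a ha hba => ha.resolve_left fun ha' => hAB a ha' b hb hba.symm)
      x hx

lemma not_adj_of_mem_diff_boundaryIn {L M : Set V} {x y : V} (hx : x ∈ M \ boundaryIn G L M)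
    (hy : y ∈ L \ M) : ¬ G.Adj x y :=
  fun hxy => hx.2 ⟨hx.1, y, hy, hxy⟩

lemma diff_boundaryIn_union_eq {L M L₁ : Set V} (hML : M ⊆ L) (hL₁ : L₁ ⊆ L \ M) :
    L \ (boundaryIn G L M ∪ L₁) = (M \ boundaryIn G L M) ∪ ((L \ M) \ L₁) := by
  have hB : boundaryIn G L M ⊆ M := fun _ hx => hx.1
  ext x
  have := @hML x
  have := @hB x
  have := @hL₁ x
  simp only [Set.mem_sdiff, Set.mem_union] at *
  tauto

lemma smallComponents_diff_boundaryIn_union {L M L₁ : Set V} {k : ℕ} (hL : L.Finite)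
    (hML : M ⊆ L) (hMk : M.ncard ≤ k) (hL₁ : L₁ ⊆ L \ M)
    (hrest : SmallComponents G ((L \ M) \ L₁) k) :
    SmallComponents G (L \ (boundaryIn G L M ∪ L₁)) k := by
  rw [diff_boundaryIn_union_eq hML hL₁]
  refine SmallComponents.union ?_ hrest fun x hx y hy => not_adj_of_mem_diff_boundaryIn hx hy.1
  exact smallComponents_of_ncard_le ((hL.subset hML).sdiff)
    ((Set.ncard_le_ncard Set.sdiff_subset (hL.subset hML)).trans hMk)

lemma ncard_boundaryIn_union_lt {L M L₁ : Set V} {ε : ℝ} (hL : L.Finite) (hML : M ⊆ L)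
    (hM : IsFolnerIn G L ε M) (hL₁ : (L₁.ncard : ℝ) ≤ ε * (L \ M).ncard) :
    ((boundaryIn G L M ∪ L₁).ncard : ℝ) < ε * L.ncard := by
  have hunion : ((boundaryIn G L M ∪ L₁).ncard : ℝ) ≤ (boundaryIn G L M).ncard + L₁.ncard := by
    exact_mod_cast Set.ncard_union_le _ _
  have hsplit : ((L \ M).ncard : ℝ) + M.ncard = L.ncard := by
    exact_mod_cast Set.ncard_sdiff_add_ncard_of_subset hML hL
  rw [← hsplit, mul_add]
  linarith [hM.2]

theorem exists_sparse_separator_of_folner {ε : ℝ} {k : ℕ}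
    (hfolner : ∀ L : Set V, L.Finite → L.Nonempty →
      ∃ M : Set V, M ⊆ L ∧ M.Nonempty ∧ M.ncard ≤ k ∧ IsFolnerIn G L ε M)
    {L : Set V} (hL : L.Finite) (hne : L.Nonempty) :
    ∃ L' ⊆ L, (L'.ncard : ℝ) < ε * L.ncard ∧ SmallComponents G (L \ L') k := by
  induction hn : L.ncard using Nat.strong_induction_on generalizing L with
  | _ n ih =>
  subst hn
  obtain ⟨M, hML, hMne, hMk, hM⟩ := hfolner L hL hne
  obtain ⟨L₁, hL₁, hL₁card, hL₁comp⟩ : ∃ L₁ ⊆ L \ M,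
      (L₁.ncard : ℝ) ≤ ε * (L \ M).ncard ∧ SmallComponents G ((L \ M) \ L₁) k := by
    rcases (L \ M).eq_empty_or_nonempty with hempty | hrest
    · exact ⟨∅, Set.empty_subset _, by simp [hempty], by simp [hempty, SmallComponents]⟩
    · have hlt : (L \ M).ncard < L.ncard :=
        Set.ncard_lt_ncard (Set.sdiff_ssubset_left_iff.mpr
          (hMne.mono (Set.subset_inter hML subset_rfl))) hL
      obtain ⟨L₁, hL₁, hcard, hcomp⟩ := ih _ hlt hL.sdiff hrest rfl
      exact ⟨L₁, hL₁, hcard.le, hcomp⟩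
  exact ⟨boundaryIn G L M ∪ L₁,
    Set.union_subset (fun _ hx => hML hx.1) (hL₁.trans Set.sdiff_subset),
    ncard_boundaryIn_union_lt hL hML hM hL₁card,
    smallComponents_diff_boundaryIn_union hL hML hMk hL₁ hL₁comp⟩

theorem uniformlyLocallyAmenable_implies_locallyHyperfinite_general
    {V : Type}
    (G : SimpleGraph V)
    (hULA : UniformlyLocallyAmenable G) :
    LocallyHyperfinite G := by
  intro ε hε
  obtain ⟨k, hk, hfolner⟩ := hULA ε hε
  exact ⟨k, hk, fun L hL hne => exists_sparse_separator_of_folner hfolner hL hne⟩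

/-- Uniform local amenability implies local hyperfiniteness. -/
theorem uniformlyLocallyAmenable_implies_locallyHyperfinite
    (d : ℕ) (hd : 0 < d) {V : Type} [Countable V]
    (G : SimpleGraph V) (hdeg : DegLE G d)
    (hULA : UniformlyLocallyAmenable G) :
    LocallyHyperfinite G :=
  uniformlyLocallyAmenable_implies_locallyHyperfinite_general G hULA

end AFPaper
end

section
/- Let d be a positive integer and let G be a countable graph with all vertex degrees at most d. If G is weighted hyperfinite, then G is strongly hyperfinite. -/
open scoped ENNReal
open MeasureTheory

/-!
Separators form a closed, hence compact, subset of `V → Bool`, so the probability measures on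
them form a compact space, on which `μ ↦ μ {Y | x ∈ Y}` is continuous since `{Y | x ∈ Y}` is
clopen. For finitely many vertices, weighted hyperfiniteness is the dual side of a min-max
statement: Hahn–Banach separation yields a probability measure on separators giving mass at most
`ε` to each of them. These closed conditions are directed, so by compactness a single measure
satisfies all of them.
-/

theorem exists_mem_forall_le_of_forall_exists_sum_mul_le {ι : Type*} [Fintype ι]
    {M : Set (ι → ℝ)} (hconv : Convex ℝ M) (hcpt : IsCompact M) {ε : ℝ}
    (h : ∀ w : ι → ℝ, 0 ≤ w → ∃ u ∈ M, ∑ i, w i * u i ≤ ε * ∑ i, w i) :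
    ∃ u ∈ M, ∀ i, u i ≤ ε := by
  classical
  by_contra! hM
  set K : Set (ι → ℝ) := Set.univ.pi fun _ => Set.Iic ε
  have hMK : Disjoint M K := Set.disjoint_left.2 fun u hu huK => by
    obtain ⟨i, hi⟩ := hM u hu
    exact hi.not_ge (huK i (Set.mem_univ i))
  obtain ⟨f, a, b, hfM, hab, hfK⟩ := geometric_hahn_banach_compact_closed hconv hcpt
    (convex_pi fun _ _ => convex_Iic ε) (isClosed_set_pi fun _ _ => isClosed_Iic) hMK
  set e : ι → ι → ℝ := fun i j => if i = j then 1 else 0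
  have hf : ∀ u, f u = ∑ i, u i * f (e i) := (f : (ι → ℝ) →ₗ[ℝ] ℝ).pi_apply_eq_sum_univ
  have hεK : (fun _ => ε) ∈ K := fun _ _ => Set.mem_Iic.2 le_rfl
  -- `f` is bounded below on `K`, which contains `ε - t • e i` for all `t ≥ 0`
  have hfe : ∀ i, f (e i) ≤ 0 := by
    intro i
    by_contra! hpos
    set t := (f (fun _ => ε) - b) / f (e i)
    have ht : 0 ≤ t := div_nonneg (by linarith [hfK _ hεK]) hpos.le
    have hmem : (fun _ => ε) - t • e i ∈ K := fun j _ => by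
      simp only [Set.mem_Iic, Pi.sub_apply, Pi.smul_apply, smul_eq_mul, e]
      split_ifs <;> nlinarith
    have := hfK _ hmem
    rw [map_sub, map_smul, smul_eq_mul, div_mul_cancel₀ _ hpos.ne'] at this
    linarith
  obtain ⟨u, huM, hu⟩ := h (fun i => -f (e i)) fun i => neg_nonneg.2 (hfe i)
  have h1 := hfM u huM
  have h2 := hfK _ hεK
  rw [hf] at h1 h2
  rw [← Finset.mul_sum] at h2
  simp only [neg_mul, Finset.sum_neg_distrib, mul_comm (f _)] at hu
  linarith

theorem convex_range_probabilityMeasure_apply {X ι : Type*} [MeasurableSpace X]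
    (E : ι → Set X) :
    Convex ℝ (Set.range fun ρ : ProbabilityMeasure X => fun i => (ρ (E i) : ℝ)) := by
  rintro _ ⟨ρ₁, rfl⟩ _ ⟨ρ₂, rfl⟩ a b ha hb hab
  let μ : Measure X := ENNReal.ofReal a • (ρ₁ : Measure X) + ENNReal.ofReal b • (ρ₂ : Measure X)
  have : IsProbabilityMeasure μ :=
    ⟨by simp [μ, ← ENNReal.ofReal_add ha hb, hab]⟩
  refine ⟨⟨μ, this⟩, funext fun i => ?_⟩
  simp only [ProbabilityMeasure.coeFn_mk, Measure.add_apply, Measure.smul_apply, smul_eq_mul,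
    ProbabilityMeasure.coeFn_def, ENNReal.coe_toNNReal_eq_toReal, μ]
  rw [ENNReal.toReal_add (by finiteness) (by finiteness), ENNReal.toReal_mul, ENNReal.toReal_mul,
    ENNReal.toReal_ofReal ha, ENNReal.toReal_ofReal hb]
  rfl

theorem continuous_probabilityMeasure_apply_of_isClopen {X : Type*} [MeasurableSpace X]
    [TopologicalSpace X] [OpensMeasurableSpace X] [HasOuterApproxClosed X] {E : Set X}
    (hE : IsClopen E) : Continuous fun ρ : ProbabilityMeasure X => ρ E :=
  continuous_iff_continuousAt.2 fun _ =>
    ProbabilityMeasure.tendsto_measure_of_isClopen_of_tendsto Filter.tendsto_id hE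

section Compactness

variable {X ι : Type*} [MeasurableSpace X] [TopologicalSpace X] [OpensMeasurableSpace X]
  [HasOuterApproxClosed X] {E : ι → Set X} {ε : ℝ}

theorem exists_probabilityMeasure_forall_mem_apply_le [CompactSpace X] [T2Space X] [BorelSpace X]
    (hE : ∀ i, IsClopen (E i))
    (h : ∀ w : ι → ℝ, (Function.support w).Finite → (∀ i, 0 ≤ w i) →
      ∃ y : X, (∑ᶠ i ∈ {i | y ∈ E i}, w i) ≤ ε * ∑ᶠ i, w i)
    (S : Finset ι) :
    ∃ ρ : ProbabilityMeasure X, ∀ i ∈ S, (ρ (E i) : ℝ) ≤ ε := by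
  classical
  set F := fun (ρ : ProbabilityMeasure X) (i : S) => (ρ (E i) : ℝ)
  suffices hF : ∃ u ∈ Set.range F, ∀ i, u i ≤ ε by
    obtain ⟨_, ⟨ρ, rfl⟩, hρ⟩ := hF
    exact ⟨ρ, fun i hi => hρ ⟨i, hi⟩⟩
  have hcont : Continuous F := continuous_pi fun i =>
    NNReal.continuous_coe.comp (continuous_probabilityMeasure_apply_of_isClopen (hE i))
  refine exists_mem_forall_le_of_forall_exists_sum_mul_le
    (convex_range_probabilityMeasure_apply _) (isCompact_range hcont) fun w hw => ?_
  set W : ι → ℝ := fun i => if hi : i ∈ S then w ⟨i, hi⟩ else 0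
  have hWS : Function.support W ⊆ S := fun i hi => by
    by_contra h; exact hi (dif_neg h)
  obtain ⟨y, hy⟩ := h W ((S.finite_toSet).subset hWS) fun i =>
    dite_nonneg (fun hi => hw ⟨i, hi⟩) fun _ => le_rfl
  refine ⟨_, ⟨⟨Measure.dirac y, inferInstance⟩, rfl⟩, ?_⟩
  have hW : ∀ i : S, W i = w i := fun i => dif_pos i.2
  rw [finsum_eq_sum_of_support_subset W hWS, finsum_mem_def,
    finsum_eq_sum_of_support_subset ({i | y ∈ E i}.indicator W)
      (by rw [Set.support_indicator]; exact Set.inter_subset_right.trans hWS),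
    ← Finset.sum_coe_sort S, ← Finset.sum_coe_sort S] at hy
  convert hy using 2 with i
  · by_cases hi : y ∈ E i <;> simp [Set.indicator, hW, hi]
  · simp [hW]

theorem exists_probabilityMeasure_forall_apply_le [CompactSpace X] [T2Space X] [BorelSpace X]
    (hE : ∀ i, IsClopen (E i))
    (h : ∀ w : ι → ℝ, (Function.support w).Finite → (∀ i, 0 ≤ w i) →
      ∃ y : X, (∑ᶠ i ∈ {i | y ∈ E i}, w i) ≤ ε * ∑ᶠ i, w i) :
    ∃ ρ : ProbabilityMeasure X, ∀ i, (ρ (E i) : ℝ) ≤ ε := by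
  set P : Finset ι → Set (ProbabilityMeasure X) := fun S => {ρ | ∀ i ∈ S, (ρ (E i) : ℝ) ≤ ε}
  have hP : ∀ S, IsClosed (P S) := fun S => by
    simp only [P, Set.ofPred_forall]
    exact isClosed_biInter fun i _ => isClosed_le
      (NNReal.continuous_coe.comp (continuous_probabilityMeasure_apply_of_isClopen (hE i)))
      continuous_const
  have hanti : Antitone P := fun S T hST ρ hρ i hi => hρ i (hST hi)
  obtain ⟨ρ, hρ⟩ := IsCompact.nonempty_iInter_of_directed_nonempty_isCompact_isClosed P
    hanti.directed_ge (fun S => exists_probabilityMeasure_forall_mem_apply_le hE h S)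
    (fun S => (hP S).isCompact) hP
  exact ⟨ρ, fun i => Set.mem_iInter.1 hρ {i} i (Finset.mem_singleton_self i)⟩

end Compactness

theorem Set.exists_finset_subset_lt_card {α : Type*} {s : Set α} {k : ℕ}
    (h : ¬ (s.Finite ∧ s.ncard ≤ k)) :
    ∃ t : Finset α, ↑t ⊆ s ∧ k < t.card := by
  by_cases hs : s.Finite
  · exact ⟨hs.toFinset, by simp, by
      rw [← Set.ncard_eq_toFinset_card s hs]; exact Nat.lt_of_not_le (not_and.1 h hs)⟩
  · obtain ⟨t, hts, ht⟩ := Set.Infinite.exists_subset_card_eq hs (k + 1)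
    exact ⟨t, hts, by omega⟩

namespace AFPaper

section Separators

variable {V : Type*} {G : SimpleGraph V} {S : Set V} {x y : V}

theorem mem_componentIn_iff :
    y ∈ componentIn G S x ↔ ∃ w : G.Walk x y, ∀ z ∈ w.support, z ∈ S := by
  constructor
  · rintro ⟨_, _, ⟨w⟩⟩
    let w' := w.map (SimpleGraph.Embedding.induce S).toHom
    refine ⟨w', fun z hz => ?_⟩
    change z ∈ w'.support at hz
    rw [SimpleGraph.Walk.support_map] at hz
    obtain ⟨z, -, rfl⟩ := List.mem_map.1 hz
    exact z.2
  · rintro ⟨w, hw⟩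
    exact ⟨_, _, (w.connected_induce_support.preconnected ⟨x, w.start_mem_support⟩
      ⟨y, w.end_mem_support⟩).map (G.induceHomOfLE hw).toHom⟩

theorem isClosed_setOf_isSeparator (G : SimpleGraph V) (k : ℕ) :
    IsClosed {f : V → Bool | IsSeparator G k {x | f x = true}} := by
  classical
  refine isOpen_compl_iff.1 (isOpen_iff_forall_mem_open.2 fun f hf => ?_)
  simp only [Set.mem_compl_iff, Set.mem_ofPred_eq, IsSeparator, SmallComponents,
    not_forall] at hf
  obtain ⟨x, hx, hbig⟩ := hf
  obtain ⟨T, hTC, hkT⟩ := Set.exists_finset_subset_lt_card hbig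
  choose w hw using fun y (hy : y ∈ T) => mem_componentIn_iff.1 (hTC hy)
  -- every `g` vanishing on the walks from `x` to `T` still has a component with `T` in it
  set U : Finset V := T.attach.biUnion fun y => (w y.1 y.2).support.toFinset
  have hU : ∀ y (hy : y ∈ T), ∀ z ∈ (w y hy).support, z ∈ U := fun y hy z hz =>
    Finset.mem_biUnion.2 ⟨⟨y, hy⟩, Finset.mem_attach _ _, List.mem_toFinset.2 hz⟩
  refine ⟨(U : Set V).pi fun _ => {false}, fun g hg hsep => ?_,
    isOpen_set_pi U.finite_toSet fun _ _ => isOpen_discrete _, fun z hz => ?_⟩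
  · have hgU : ∀ z ∈ U, z ∈ ({x | g x = true} : Set V)ᶜ := fun z hz => by
      simpa using hg z hz
    obtain ⟨y, hy⟩ := Finset.card_pos.1 (by omega : 0 < T.card)
    have hxg := hgU x (hU y hy x (w y hy).start_mem_support)
    have hTg : ↑T ⊆ componentIn G {x | g x = true}ᶜ x := fun y hy =>
      mem_componentIn_iff.2 ⟨w y hy, fun z hz => hgU z (hU y hy z hz)⟩
    obtain ⟨hfin, hle⟩ := hsep x hxg
    have := Set.ncard_le_ncard hTg hfin
    rw [Set.ncard_coe_finset] at this
    omega
  · obtain ⟨⟨y, hy⟩, -, hz⟩ := Finset.mem_biUnion.1 hz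
    simpa using hw y hy z (List.mem_toFinset.1 hz)

instance (G : SimpleGraph V) (k : ℕ) : CompactSpace (SepSpace G k) :=
  isCompact_iff_compactSpace.1 (isClosed_setOf_isSeparator G k).isCompact

instance [Countable V] (G : SimpleGraph V) (k : ℕ) :
    TopologicalSpace.PseudoMetrizableSpace (SepSpace G k) :=
  inferInstanceAs
    (TopologicalSpace.PseudoMetrizableSpace {f : V → Bool | IsSeparator G k {x | f x = true}})

theorem isClopen_setOf_sepSpace_apply (G : SimpleGraph V) (k : ℕ) (x : V) :
    IsClopen {Y : SepSpace G k | Y.1 x = true} :=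
  (isClopen_discrete {true}).preimage ((continuous_apply x).comp continuous_subtype_val)

end Separators

theorem weightedHyperfinite_implies_stronglyHyperfinite_general
    {V : Type} [Countable V]
    (G : SimpleGraph V)
    (hWH : WeightedHyperfinite G) :
    StronglyHyperfinite G := by
  classical
  intro ε hε
  obtain ⟨k, hk, hsep⟩ := hWH (ε / 2) (by positivity)
  obtain ⟨ρ, hρ⟩ := exists_probabilityMeasure_forall_apply_le
    (isClopen_setOf_sepSpace_apply G k) fun w hw hw0 => by
      obtain ⟨L, hLw, hL⟩ := hsep w hw hw0
      exact ⟨⟨fun x => decide (x ∈ L), by simpa [IsSeparator] using hL⟩, by simpa using hLw⟩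
  refine ⟨k, hk, ρ, measure_univ, fun x => ?_⟩
  rw [← ProbabilityMeasure.ennreal_coeFn_eq_coeFn_toMeasure, ← ENNReal.ofReal_coe_nnreal,
    ENNReal.ofReal_lt_ofReal_iff hε]
  linarith [hρ x]

/-- Weighted hyperfiniteness implies strong hyperfiniteness. -/
theorem weightedHyperfinite_implies_stronglyHyperfinite
    (d : ℕ) (hd : 0 < d) {V : Type} [Countable V]
    (G : SimpleGraph V) (hdeg : DegLE G d)
    (hWH : WeightedHyperfinite G) :
    StronglyHyperfinite G :=
  weightedHyperfinite_implies_stronglyHyperfinite_general G hWH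

end AFPaper
end

section
/- Let d be a positive integer. For every ε>0 there exists δ>0 such that for every countable graph G with all vertex degrees at most d and every δ-Følner probability measure p on V(G), there exists an ε-Følner subset H of V(G) contained in the support of p with p(H) > 1−ε. -/
open scoped ENNReal
open MeasureTheory

/-! Layer cake: list the values of `p` as `0 = u₀ ≤ u₁ ≤ ⋯ ≤ uₙ` and let `F_j = {p ≥ u_{j+1}}`.
Then `∑ⱼ (u_{j+1} - uⱼ) |F_j| = ∑ p = 1`, while each edge `x ∼ y` crosses exactly the levels
between `p y` and `p x`, so `∑ⱼ (u_{j+1} - uⱼ) |∂F_j| ≤ ∑_x ∑_{y ∼ x} |p x - p y| < δ = ε²`.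
Let `m` be the first level at which the weight `∑_{j<m} (u_{j+1} - uⱼ) |F_j|` of the lower levels
reaches `ε`. If every `j < m` had `|∂F_j| ≥ ε |F_j|`, summing would give `ε · ε ≤ δ`; so some
`F_j` with `j < m` is `ε`-Følner, and the mass of `p` outside it is at most the weight below `j`,
which is less than `ε`. -/

namespace AFPaper

open Finset

section LayerCake

variable (u : ℕ → ℝ) (n : ℕ)

noncomputable def layerSum (a : ℝ) : ℝ :=
  ∑ j ∈ range n, if u (j + 1) ≤ a then u (j + 1) - u j else 0

variable {u n}

theorem layerSum_apply (hu : Monotone u) (h0 : u 0 = 0) {k : ℕ} (hk : k ≤ n) :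
    layerSum u n (u k) = u k := by
  have hterm : ∀ j ∈ range n, (if u (j + 1) ≤ u k then u (j + 1) - u j else 0) =
      if j < k then u (j + 1) - u j else 0 := by
    intro j _
    by_cases hjk : j < k
    · rw [if_pos (hu hjk), if_pos hjk]
    · rw [if_neg hjk, ite_eq_right_iff]
      intro h
      linarith [hu (Nat.le_succ j), hu (not_lt.1 hjk)]
  have hrange : (range n).filter (· < k) = range k := by
    ext j
    simp only [mem_filter, mem_range]
    omega
  rw [layerSum, sum_congr rfl hterm, ← sum_filter, hrange, sum_range_sub, h0, sub_zero]

theorem sum_layerSum {α : Type*} (A : Finset α) (f : α → ℝ) :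
    ∑ x ∈ A, layerSum u n (f x) =
      ∑ j ∈ range n, (u (j + 1) - u j) * #{x ∈ A | u (j + 1) ≤ f x} := by
  simp only [layerSum, card_filter, Nat.cast_sum, Nat.cast_ite, Nat.cast_one, Nat.cast_zero,
    mul_sum, mul_ite, mul_one, mul_zero]
  exact sum_comm

theorem sum_ite_le_abs_sub (hu : Monotone u) (h0 : u 0 = 0) {a b : ℝ}
    (ha : ∃ k ≤ n, u k = a) (hb : ∃ k ≤ n, u k = b) :
    ∑ j ∈ range n, (if u (j + 1) ≤ a ∧ b < u (j + 1) then u (j + 1) - u j else 0) ≤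
      |a - b| := by
  have hsplit : ∑ j ∈ range n, (if u (j + 1) ≤ a ∧ b < u (j + 1) then u (j + 1) - u j else 0) =
      layerSum u n a - layerSum u n (min a b) := by
    rw [layerSum, layerSum, ← sum_sub_distrib]
    refine sum_congr rfl fun j _ => ?_
    simp only [le_min_iff, ← not_le]
    split_ifs <;> simp_all
  have hval : ∀ c, (∃ k ≤ n, u k = c) → layerSum u n c = c := by
    rintro c ⟨k, hk, rfl⟩
    exact layerSum_apply hu h0 hk
  have hmin : layerSum u n (min a b) = min a b := by
    rcases min_choice a b with h | h <;> rw [h] <;> exact hval _ ‹_›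
  rw [hsplit, hval a ha, hmin]
  rcases le_total a b with h | h
  · simp [h]
  · rw [min_eq_right h]
    exact le_abs_self _

theorem sum_filter_not_le_le (hu : Monotone u) (h0 : u 0 = 0) {α : Type*} (A : Finset α)
    (f : α → ℝ) (hf : ∀ x ∈ A, ∃ k, u k = f x) (j : ℕ) :
    ∑ x ∈ A with ¬ u (j + 1) ≤ f x, f x ≤
      ∑ k ∈ range j, (u (k + 1) - u k) * #{x ∈ A | u (k + 1) ≤ f x} := by
  have hlayer : ∀ x ∈ A.filter (fun x => ¬ u (j + 1) ≤ f x), f x = layerSum u j (f x) := by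
    intro x hx
    rw [mem_filter] at hx
    obtain ⟨k, hk⟩ := hf x hx.1
    have hkj : k ≤ j := by
      by_contra h
      exact hx.2 (hk ▸ hu (by omega))
    rw [← hk, layerSum_apply hu h0 hkj]
  rw [sum_congr rfl hlayer, sum_layerSum]
  refine sum_le_sum fun k _ => mul_le_mul_of_nonneg_left ?_ (sub_nonneg.2 (hu k.le_succ))
  exact_mod_cast card_le_card (filter_subset_filter _ (filter_subset _ _))

end LayerCake

theorem exists_monotone_enum_of_finite (s : Set ℝ) (hs : s.Finite) (hnonneg : ∀ a ∈ s, 0 ≤ a) :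
    ∃ (u : ℕ → ℝ) (n : ℕ), Monotone u ∧ u 0 = 0 ∧ ∀ a ∈ s, ∃ k ≤ n, u k = a := by
  classical
  set T := insert 0 hs.toFinset
  have hT : 0 < #T := card_pos.2 (insert_nonempty _ _)
  set f := T.orderEmbOfFin rfl
  refine ⟨fun j => f ⟨min j (#T - 1), by omega⟩, #T - 1, ?_, ?_, ?_⟩
  · exact fun i j hij => f.monotone (Fin.mk_le_mk.2 (min_le_min_right _ hij))
  · have hmin : T.min' (insert_nonempty _ _) = 0 :=
      le_antisymm (min'_le _ _ (mem_insert_self _ _))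
        (le_min' _ _ _ fun a ha => by
          rcases mem_insert.1 ha with rfl | ha
          · exact le_rfl
          · exact hnonneg a (hs.mem_toFinset.1 ha))
    simpa [hmin] using T.orderEmbOfFin_zero rfl hT
  · intro a ha
    have hrange : a ∈ Set.range f := by
      rw [range_orderEmbOfFin]
      exact mem_insert_of_mem (hs.mem_toFinset.2 ha)
    obtain ⟨i, rfl⟩ := hrange
    exact ⟨i, by omega, congrArg f (Fin.ext (min_eq_left (by omega)))⟩

theorem exists_lt_mul_and_sum_range_lt {w e : ℕ → ℝ} {n : ℕ} {ε : ℝ} (hε : 0 < ε)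
    (hε1 : ε ≤ 1) (he : ∀ j, 0 ≤ e j) (hw : ∑ j ∈ range n, w j = 1)
    (hwe : ∑ j ∈ range n, e j < ε ^ 2) :
    ∃ j < n, e j < ε * w j ∧ ∑ k ∈ range j, w k < ε := by
  classical
  by_contra! hbad
  have hex : ∃ m, ε ≤ ∑ k ∈ range m, w k := ⟨n, hw ▸ hε1⟩
  set m := Nat.find hex
  have hmn : m ≤ n := Nat.find_min' hex (hw ▸ hε1)
  have hbelow : ∀ k ∈ range m, ε * w k ≤ e k := fun k hk =>
    not_lt.1 fun hlt => Nat.find_min hex (mem_range.1 hk)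
      (hbad k ((mem_range.1 hk).trans_le hmn) hlt)
  have hsum : ε * ∑ k ∈ range m, w k ≤ ∑ k ∈ range n, e k :=
    calc ε * ∑ k ∈ range m, w k = ∑ k ∈ range m, ε * w k := mul_sum _ _ _
      _ ≤ ∑ k ∈ range m, e k := sum_le_sum hbelow
      _ ≤ ∑ k ∈ range n, e k :=
        sum_le_sum_of_subset_of_nonneg (range_subset_range.2 hmn) fun k _ _ => he k
  nlinarith [mul_le_mul_of_nonneg_left (Nat.find_spec hex) hε.le]

section LevelSets

variable {V : Type*} (G : SimpleGraph V) [G.LocallyFinite] (p : V → ℝ)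

noncomputable def levelCut (S : Finset V) (t : ℝ) : ℝ :=
  ∑ x ∈ S, ∑ y ∈ G.neighborFinset x, if t ≤ p x ∧ p y < t then 1 else 0

theorem levelCut_nonneg (S : Finset V) (t : ℝ) : 0 ≤ levelCut G p S t :=
  sum_nonneg fun _ _ => sum_nonneg fun _ _ => by split_ifs <;> norm_num

variable {G p}

theorem ncard_boundary_le_levelCut {S : Finset V} (hS : ∀ x, p x ≠ 0 → x ∈ S) {t : ℝ}
    (ht : 0 < t) : ((boundary G ↑{x ∈ S | t ≤ p x}).ncard : ℝ) ≤ levelCut G p S t := by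
  have hsub : boundary G ↑{x ∈ S | t ≤ p x} ⊆
      ↑{x ∈ S | t ≤ p x ∧ ∃ y ∈ G.neighborFinset x, p y < t} := by
    rintro x ⟨hx, y, ⟨-, hy⟩, hxy⟩
    simp only [coe_filter, Set.mem_ofPred_eq, SimpleGraph.mem_neighborFinset] at hx hy ⊢
    exact ⟨hx.1, hx.2, y, hxy, not_le.1 fun hty => hy ⟨hS y (by linarith), hty⟩⟩
  calc ((boundary G ↑{x ∈ S | t ≤ p x}).ncard : ℝ)
      ≤ #{x ∈ S | t ≤ p x ∧ ∃ y ∈ G.neighborFinset x, p y < t} := by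
        exact_mod_cast (Set.ncard_le_ncard hsub).trans (Set.ncard_coe_finset _).le
    _ = ∑ x ∈ S, if t ≤ p x ∧ ∃ y ∈ G.neighborFinset x, p y < t then 1 else 0 := by
        rw [card_filter]
        push_cast
        rfl
    _ ≤ levelCut G p S t := by
        refine sum_le_sum fun x _ => ?_
        split_ifs with h
        · obtain ⟨hx, y, hy, hyt⟩ := h
          refine le_trans ?_ (single_le_sum (fun z _ => ?_) hy)
          · simp [hx, hyt]
          · split_ifs <;> norm_num
        · exact sum_nonneg fun z _ => by split_ifs <;> norm_num

theorem sum_mul_levelCut_le {u : ℕ → ℝ} {n : ℕ} (hu : Monotone u) (h0 : u 0 = 0)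
    (hvals : ∀ x, ∃ k ≤ n, u k = p x) (S : Finset V) :
    ∑ j ∈ range n, (u (j + 1) - u j) * levelCut G p S (u (j + 1)) ≤
      ∑ x ∈ S, ∑ y ∈ G.neighborFinset x, |p x - p y| := by
  simp only [levelCut, mul_sum, mul_ite, mul_one, mul_zero]
  rw [sum_comm]
  gcongr with x
  rw [sum_comm]
  gcongr with y
  exact sum_ite_le_abs_sub hu h0 (hvals x) (hvals y)

theorem sum_le_folnerSum (hp : (Function.support p).Finite) (S : Finset V) :
    ∑ x ∈ S, ∑ y ∈ G.neighborFinset x, |p x - p y| ≤ FolnerSum G p := by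
  classical
  set g : V → ℝ := fun x => ∑ y ∈ G.neighborFinset x, |p x - p y|
  have hFS : FolnerSum G p = ∑ᶠ x, g x :=
    finsum_congr fun x => by rw [← SimpleGraph.coe_neighborFinset, finsum_mem_coe_finset]
  have hg : (Function.support g).Finite := by
    refine (hp.union (hp.biUnion fun y _ => (G.neighborSet y).toFinite)).subset fun x hx => ?_
    obtain ⟨y, hy, hxy⟩ := exists_ne_zero_of_sum_ne_zero hx
    by_cases hpx : p x = 0
    · have hpy : p y ≠ 0 := fun h => hxy (by simp [hpx, h])
      exact Or.inr (Set.mem_biUnion hpy ((G.mem_neighborFinset _ _).1 hy).symm)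
    · exact Or.inl hpx
  rw [hFS, finsum_eq_sum_of_support_subset g (s := S ∪ hg.toFinset) (by simp)]
  exact sum_le_sum_of_subset_of_nonneg subset_union_left fun x _ _ =>
    sum_nonneg fun y _ => abs_nonneg _

end LevelSets

theorem IsFolner.mono {V : Type*} {G : SimpleGraph V} {ε ε' : ℝ} {H : Set V}
    (h : IsFolner G ε H) (hε : ε ≤ ε') : IsFolner G ε' H :=
  ⟨h.1, h.2.trans_le (mul_le_mul_of_nonneg_right hε (Nat.cast_nonneg _))⟩
theorem exists_superlevel_isFolner {V : Type*} {G : SimpleGraph V} [G.LocallyFinite]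
    {p : V → ℝ} (hp : (Function.support p).Finite) (hnonneg : ∀ x, 0 ≤ p x)
    (hsum : ∑ᶠ x, p x = 1) {ε : ℝ} (hε : 0 < ε) (hε1 : ε ≤ 1) (hF : FolnerSum G p < ε ^ 2) :
    ∃ t > 0, IsFolner G ε {x | t ≤ p x} ∧ 1 - ε < ∑ᶠ x ∈ {x | t ≤ p x}, p x := by
  set S := hp.toFinset
  have hS : ∀ x, p x ≠ 0 → x ∈ S := fun x hx => hp.mem_toFinset.2 hx
  have hsumS : ∑ x ∈ S, p x = 1 := by rw [← hsum, finsum_eq_sum p hp]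
  obtain ⟨u, n, hu, h0, hvals⟩ := exists_monotone_enum_of_finite (Set.range p)
    (((hp.image p).insert 0).subset (Function.range_subset_insert_image_support p))
    (by rintro _ ⟨x, rfl⟩; exact hnonneg x)
  replace hvals : ∀ x, ∃ k ≤ n, u k = p x := fun x => hvals _ ⟨x, rfl⟩
  set F : ℕ → Finset V := fun j => {x ∈ S | u (j + 1) ≤ p x}
  have hgap : ∀ j, 0 ≤ u (j + 1) - u j := fun j => sub_nonneg.2 (hu j.le_succ)
  have hmass : ∑ j ∈ range n, (u (j + 1) - u j) * #(F j) = 1 := by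
    rw [← sum_layerSum, ← hsumS]
    refine sum_congr rfl fun x _ => ?_
    obtain ⟨k, hk, hkx⟩ := hvals x
    rw [← hkx, layerSum_apply hu h0 hk]
  have hcut : ∑ j ∈ range n, (u (j + 1) - u j) * levelCut G p S (u (j + 1)) < ε ^ 2 :=
    ((sum_mul_levelCut_le hu h0 hvals S).trans (sum_le_folnerSum hp S)).trans_lt hF
  obtain ⟨j, -, hcutj, htail⟩ := exists_lt_mul_and_sum_range_lt hε hε1
    (fun j => mul_nonneg (hgap j) (levelCut_nonneg G p S _)) hmass hcut
  have hgapj : 0 < u (j + 1) - u j := by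
    refine (hgap j).lt_of_ne fun h => ?_
    rw [← h, zero_mul, zero_mul, mul_zero] at hcutj
    exact hcutj.false
  have ht : 0 < u (j + 1) := by linarith [hu (Nat.zero_le j)]
  have hset : {x | u (j + 1) ≤ p x} = ↑(F j) := by
    ext x
    simp only [Set.mem_ofPred_eq, mem_coe, F, mem_filter, S, Set.Finite.mem_toFinset,
      Function.mem_support]
    exact ⟨fun h => ⟨(ht.trans_le h).ne', h⟩, And.right⟩
  refine ⟨u (j + 1), ht, ?_, ?_⟩
  · rw [hset]
    refine ⟨(F j).finite_toSet, ?_⟩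
    calc ((boundary G ↑(F j)).ncard : ℝ) ≤ levelCut G p S (u (j + 1)) :=
          ncard_boundary_le_levelCut hS ht
      _ < ε * #(F j) := lt_of_mul_lt_mul_left (by linarith) hgapj.le
      _ = ε * (↑(F j) : Set V).ncard := by rw [Set.ncard_coe_finset]
  · rw [hset, finsum_mem_coe_finset]
    have hsplit := sum_filter_add_sum_filter_not S (fun x => u (j + 1) ≤ p x) p
    have hrest := sum_filter_not_le_le hu h0 S p (fun x _ => (hvals x).imp fun _ => And.right) j
    linarith

theorem folnerProb_contains_folner_set_general (d : ℕ) :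
    ∀ ε : ℝ, 0 < ε → ∃ δ : ℝ, 0 < δ ∧
      ∀ (V : Type) (_ : Countable V) (G : SimpleGraph V), DegLE G d →
        ∀ p : V → ℝ, IsFolnerProb G δ p →
          ∃ H : Set V, H ⊆ Function.support p ∧ IsFolner G ε H ∧
            1 - ε < ∑ᶠ x ∈ H, p x := by
  intro ε hε
  refine ⟨min ε 1 ^ 2, by positivity, ?_⟩
  rintro V - G hG p ⟨⟨hp, hnonneg, -, hF⟩, hsum⟩
  have : G.LocallyFinite := fun v => (hG v).1.fintype
  rw [hsum, mul_one] at hF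
  obtain ⟨t, ht, hfolner, hmass⟩ := exists_superlevel_isFolner hp hnonneg hsum
    (lt_min hε one_pos) (min_le_right _ _) hF
  refine ⟨{x | t ≤ p x}, fun x hx => (ht.trans_le hx).ne', hfolner.mono (min_le_left _ _), ?_⟩
  linarith [min_le_left ε 1]

/-- every δ-Følner probability measure contains an ε-Følner set of
measure more than 1 − ε in its support, for δ depending only on ε (and d). -/
theorem folnerProb_contains_folner_set (d : ℕ) (hd : 0 < d) :
    ∀ ε : ℝ, 0 < ε → ∃ δ : ℝ, 0 < δ ∧
      ∀ (V : Type) (_ : Countable V) (G : SimpleGraph V), DegLE G d →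
        ∀ p : V → ℝ, IsFolnerProb G δ p →
          ∃ H : Set V, H ⊆ Function.support p ∧ IsFolner G ε H ∧
            1 - ε < ∑ᶠ x ∈ H, p x :=
  folnerProb_contains_folner_set_general d

end AFPaper
end
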